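/- arXiv:2411.07166 — 9 statements merged into one kernel-verified Lean document; each statement's English description precedes it below -/
import Mathlib

section
/- Let (N, M, t) be a streaming problem and let v be the associated TU game defined for each S ⊆ N by v(S) = |{j ∈ M : L^j ⊆ S}|. Then for each artist i ∈ N, the Shapley value of i in the game (N, v) — i.e., (1/n!)·Σ_{π} [v(Pre(i,π) ∪ {i}) − v(Pre(i,π))], where the sum runs over all n! linear orders π of N and Pre(i,π) denotes the set of agents preceding i in π — equals Σ_{j ∈ M : t_{ij} > 0} 1/|L^j|. -/
/-! The marginal contribution of artist `i` to the set of its predecessors in an order `σ` is the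
number of users `j` with `t i j > 0` for whom `i` comes last in `σ` among the artists of `L^j`.
Composing `σ` with the transposition of two artists of `L^j` exchanges which of them comes last,
so each artist of `L^j` is last in exactly `n! / |L^j|` orders, and averaging over all orders
gives `∑_{j : t i j > 0} 1 / |L^j|`. -/

open Finset

/-- A streaming problem: a finite nonempty set `N` of artists, a finite nonempty set
`M` of users, and a streams matrix `t` such that every user streamed some content. -/
structure StreamingProblem where
  N : Finset ℕ
  M : Finset ℕ
  t : ℕ → ℕ → ℕ
  N_nonempty : N.Nonempty
  M_nonempty : M.Nonempty
  streams_pos : ∀ j ∈ M, 0 < ∑ i ∈ N, t i j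

namespace StreamingProblem

/-- `L^j` : the set of artists streamed by user `j`. -/
def Lset (P : StreamingProblem) (j : ℕ) : Finset ℕ :=
  P.N.filter fun i => 0 < P.t i j

/-- `F_i` : the set of fans of artist `i`. -/
def Fset (P : StreamingProblem) (i : ℕ) : Finset ℕ :=
  P.M.filter fun j => 0 < P.t i j

/-- The Shapley index: `Sh_i(N,M,t) = ∑_{j ∈ M : t_{ij} > 0} 1 / |L^j|`. -/
noncomputable def Sh (P : StreamingProblem) (i : ℕ) : ℝ :=
  ∑ j ∈ P.M.filter (fun j => 0 < P.t i j), (1 : ℝ) / ((P.Lset j).card : ℝ)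

end StreamingProblem

open StreamingProblem

/-- The pessimistic TU game associated to a streaming problem:
`v(S)` is the number of users who only streamed artists in `S`. -/
def pessGame (P : StreamingProblem) (S : Finset ℕ) : ℕ :=
  (P.M.filter fun j => P.Lset j ⊆ S).card

open Equiv
open scoped Nat

section Orderings

variable {α : Type*} {n : ℕ}

def predecessors [Fintype α] (σ : Fin n ≃ α) (a : α) : Finset α :=
  {x | σ.symm x < σ.symm a}

def IsLastIn (σ : Fin n ≃ α) (K : Finset α) (a : α) : Prop :=
  ∀ x ∈ K, σ.symm x ≤ σ.symm a

instance (σ : Fin n ≃ α) (K : Finset α) (a : α) : Decidable (IsLastIn σ K a) :=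
  inferInstanceAs (Decidable (∀ x ∈ K, _))

theorem image_filter_lt_symm [Fintype α] [DecidableEq α] {β : Type*} [DecidableEq β]
    (σ : Fin n ≃ α) (a : α) (f : α → β) :
    ({k | k < σ.symm a} : Finset (Fin n)).image (fun k => f (σ k)) =
      (predecessors σ a).image f := by
  change image (f ∘ σ) _ = _
  rw [← image_image]
  congr 1
  ext x
  simp [predecessors, ← Equiv.eq_symm_apply]

theorem self_notMem_predecessors [Fintype α] (σ : Fin n ≃ α) (a : α) :
    a ∉ predecessors σ a := by
  simp [predecessors]

theorem subset_insert_predecessors_iff [Fintype α] [DecidableEq α] (σ : Fin n ≃ α)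
    (K : Finset α) (a : α) : K ⊆ insert a (predecessors σ a) ↔ IsLastIn σ K a := by
  refine forall₂_congr fun x _ => ?_
  simp [predecessors, le_iff_lt_or_eq, or_comm]

theorem isLastIn_trans_swap_iff [DecidableEq α] {K : Finset α} {a b : α} (ha : a ∈ K)
    (hb : b ∈ K) (σ : Fin n ≃ α) : IsLastIn (σ.trans (swap a b)) K b ↔ IsLastIn σ K a := by
  have hswap : ∀ x ∈ K, swap a b x ∈ K := fun x hx => by
    rw [swap_apply_def]; split_ifs <;> assumption
  simp only [IsLastIn, symm_trans_apply, symm_swap, swap_apply_right]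
  exact ⟨fun h x hx => by simpa using h _ (hswap x hx), fun h x hx => h _ (hswap x hx)⟩

theorem card_isLastIn_eq [Fintype α] [DecidableEq α] {K : Finset α} {a b : α} (ha : a ∈ K)
    (hb : b ∈ K) : #{σ : Fin n ≃ α | IsLastIn σ K a} = #{σ : Fin n ≃ α | IsLastIn σ K b} := by
  refine card_nbij' (·.trans (swap a b)) (·.trans (swap a b)) ?_ ?_ ?_ ?_
  · intro σ hσ
    simpa [isLastIn_trans_swap_iff ha hb] using hσ
  · intro σ hσ
    simpa [swap_comm a b, isLastIn_trans_swap_iff hb ha] using hσ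
  all_goals intro σ _; simp [trans_assoc]

theorem card_isLastIn_mul_card [Fintype α] [DecidableEq α] (hn : Fintype.card α = n)
    {K : Finset α} {a : α} (ha : a ∈ K) : #{σ : Fin n ≃ α | IsLastIn σ K a} * #K = n ! := by
  have hcover : (univ : Finset (Fin n ≃ α)) = K.biUnion fun b => {σ | IsLastIn σ K b} := by
    ext σ
    simp only [mem_univ, mem_biUnion, mem_filter, true_and, true_iff]
    exact K.exists_max_image σ.symm ⟨a, ha⟩
  have hdisj : (K : Set α).PairwiseDisjoint
      fun b => ({σ | IsLastIn σ K b} : Finset (Fin n ≃ α)) :=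
    fun b hb b' hb' hne => disjoint_filter.2 fun σ _ h h' =>
      hne (σ.symm.injective (le_antisymm (h' b hb) (h b' hb')))
  calc #{σ : Fin n ≃ α | IsLastIn σ K a} * #K
      = ∑ b ∈ K, #{σ : Fin n ≃ α | IsLastIn σ K b} := by
        rw [sum_congr rfl fun b hb => (card_isLastIn_eq ha hb).symm, sum_const, smul_eq_mul,
          mul_comm]
    _ = Fintype.card (Fin n ≃ α) := by rw [← card_biUnion hdisj, ← hcover, card_univ]
    _ = n ! := by rw [Fintype.card_equiv (Fintype.equivFinOfCardEq hn).symm, Fintype.card_fin]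

theorem card_isLastIn_div_factorial [Fintype α] [DecidableEq α] (hn : Fintype.card α = n)
    {K : Finset α} {a : α} (ha : a ∈ K) :
    (#{σ : Fin n ≃ α | IsLastIn σ K a} : ℝ) / n ! = 1 / #K := by
  have hK : (#K : ℝ) ≠ 0 := Nat.cast_ne_zero.2 (card_ne_zero_of_mem ha)
  rw [div_eq_div_iff (by positivity) hK, one_mul]
  exact_mod_cast card_isLastIn_mul_card hn ha

end Orderings

theorem card_filter_subset_insert {ι β : Type*} [DecidableEq ι] [DecidableEq β] (M : Finset ι)
    (L : ι → Finset β) {S : Finset β} {b : β} (hb : b ∉ S) :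
    #{j ∈ M | L j ⊆ insert b S} =
      #{j ∈ M | L j ⊆ S} + #{j ∈ M | b ∈ L j ∧ L j ⊆ insert b S} := by
  rw [← card_union_of_disjoint, ← filter_or]
  · congr 1
    ext j
    by_cases hj : b ∈ L j
    · simpa [hj] using fun _ (h : L j ⊆ S) => h.trans (subset_insert b S)
    · simp [hj, subset_insert_iff_of_notMem hj]
  · exact disjoint_filter.2 fun j _ hS ⟨hj, _⟩ => hb (hS hj)

theorem pessGame_insert (P : StreamingProblem) {i : ℕ} (hi : i ∈ P.N) {S : Finset ℕ}
    (hiS : i ∉ S) :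
    pessGame P (insert i S) = pessGame P S + #{j ∈ P.Fset i | P.Lset j ⊆ insert i S} := by
  rw [pessGame, pessGame, card_filter_subset_insert _ _ hiS]
  congr 2
  ext j
  simp only [mem_filter]
  simp [Fset, Lset, hi, and_assoc]

namespace StreamingProblem

theorem lset_subset (P : StreamingProblem) (j : ℕ) : P.Lset j ⊆ P.N :=
  filter_subset _ _

theorem card_subtype_lset (P : StreamingProblem) (j : ℕ) :
    #((P.Lset j).subtype (· ∈ P.N)) = #(P.Lset j) := by
  rw [card_subtype, filter_true_of_mem fun x hx => P.lset_subset j hx]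

theorem lset_subset_insert_iff_isLastIn (P : StreamingProblem) {n : ℕ} (σ : Fin n ≃ P.N)
    (a : P.N) (j : ℕ) :
    P.Lset j ⊆ insert a.1 ((predecessors σ a).image Subtype.val) ↔
      IsLastIn σ ((P.Lset j).subtype (· ∈ P.N)) a := by
  rw [← subset_insert_predecessors_iff, ← image_insert,
    ← image_subset_image_iff Subtype.val_injective]
  conv_lhs => rw [← subtype_map_of_mem (s := P.Lset j) fun x hx => P.lset_subset j hx]
  rw [map_eq_image]
  rfl

end StreamingProblem

theorem pessGame_insert_predecessors (P : StreamingProblem) {n : ℕ} (σ : Fin n ≃ P.N)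
    (a : P.N) :
    pessGame P (insert a.1 ((predecessors σ a).image Subtype.val)) =
      pessGame P ((predecessors σ a).image Subtype.val) +
        #{j ∈ P.Fset a | IsLastIn σ ((P.Lset j).subtype (· ∈ P.N)) a} := by
  rw [pessGame_insert P a.2 (by simpa using self_notMem_predecessors σ a)]
  simp only [lset_subset_insert_iff_isLastIn]

/-- The Shapley value of artist `i` in the pessimistic game, computed as the average
over all `n!` linear orders of `N` of the marginal contribution of `i`, equals
`∑_{j ∈ M : t_{ij} > 0} 1/|L^j|`, the Shapley index. -/
theorem shapley_value_formula (P : StreamingProblem) (i : ℕ) (hi : i ∈ P.N) :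
    (1 / (Nat.factorial P.N.card : ℝ)) *
      ∑ σ : Fin P.N.card ≃ {x // x ∈ P.N},
        (((pessGame P (insert i
            ((Finset.univ.filter fun a => a < σ.symm ⟨i, hi⟩).image fun a => (σ a).1))) : ℝ) -
          ((pessGame P
            ((Finset.univ.filter fun a => a < σ.symm ⟨i, hi⟩).image fun a => (σ a).1)) : ℝ))
      = P.Sh i := by
  simp only [image_filter_lt_symm (f := Subtype.val), pessGame_insert_predecessors P _ ⟨i, hi⟩,
    Nat.cast_add, add_sub_cancel_left, natCast_card_filter]
  rw [sum_comm, mul_sum, Sh]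
  refine sum_congr rfl fun j hj => ?_
  have hi_mem : (⟨i, hi⟩ : P.N) ∈ (P.Lset j).subtype (· ∈ P.N) := by
    simpa [Lset, hi] using (mem_filter.1 hj).2
  rw [sum_boole, one_div_mul_eq_div,
    card_isLastIn_div_factorial (Fintype.card_coe P.N) hi_mem, card_subtype_lset]
end

section
/- Let (N, M, t) be a streaming problem, let v be the pessimistic TU game defined for each S ⊆ N by v(S) = |{j ∈ M : L^j ⊆ S}|, and let v^o be the optimistic TU game defined for each S ⊆ N by v^o(S) = |⋃_{i∈S} F_i|. Then v^o is the dual of v: for every S ⊆ N, v(N) − v(N∖S) = v^o(S). -/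
open Finset

open StreamingProblem

/-- The optimistic TU game associated to a streaming problem:
`v^o(S) = |⋃_{i ∈ S} F_i|`, the number of users who streamed some artist in `S`. -/
def optGame (P : StreamingProblem) (S : Finset ℕ) : ℕ :=
  (S.biUnion fun i => P.Fset i).card

/-! A user is missing from `v(N \ S)` exactly when `L^j` meets `S`, i.e. exactly when the user is a
fan of some artist in `S`; so both sides count the users whose `L^j` meets `S`. -/

namespace StreamingProblem

variable (P : StreamingProblem)

theorem Lset_subset (j : ℕ) : P.Lset j ⊆ P.N :=
  filter_subset _ _

theorem mem_Fset_iff_mem_Lset {i j : ℕ} (hi : i ∈ P.N) : j ∈ P.Fset i ↔ j ∈ P.M ∧ i ∈ P.Lset j := by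
  simp only [Fset, Lset, mem_filter, hi, true_and]

theorem Lset_subset_sdiff_iff (S : Finset ℕ) (j : ℕ) :
    P.Lset j ⊆ P.N \ S ↔ Disjoint (P.Lset j) S := by
  rw [subset_sdiff, and_iff_right (P.Lset_subset j)]

theorem biUnion_Fset_eq_filter {S : Finset ℕ} (hS : S ⊆ P.N) :
    (S.biUnion fun i => P.Fset i) = P.M.filter fun j => ¬Disjoint (P.Lset j) S := by
  ext j
  simp only [mem_biUnion, mem_filter, not_disjoint_iff]
  constructor
  · rintro ⟨i, hiS, hj⟩
    obtain ⟨hjM, hiL⟩ := (P.mem_Fset_iff_mem_Lset (hS hiS)).1 hj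
    exact ⟨hjM, i, hiL, hiS⟩
  · rintro ⟨hjM, i, hiL, hiS⟩
    exact ⟨i, hiS, (P.mem_Fset_iff_mem_Lset (hS hiS)).2 ⟨hjM, hiL⟩⟩

end StreamingProblem

theorem pessGame_N_eq_card_M (P : StreamingProblem) : pessGame P P.N = P.M.card := by
  rw [pessGame, filter_true_of_mem fun j _ => P.Lset_subset j]

theorem pessGame_sdiff_eq_card_filter_disjoint (P : StreamingProblem) (S : Finset ℕ) :
    pessGame P (P.N \ S) = (P.M.filter fun j => Disjoint (P.Lset j) S).card := by
  simp only [pessGame, P.Lset_subset_sdiff_iff]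

theorem optGame_eq_card_filter_not_disjoint (P : StreamingProblem) {S : Finset ℕ} (hS : S ⊆ P.N) :
    optGame P S = (P.M.filter fun j => ¬Disjoint (P.Lset j) S).card := by
  rw [optGame, P.biUnion_Fset_eq_filter hS]

/-- The optimistic game is the dual of the pessimistic game:
for every `S ⊆ N`, `v(N) - v(N \ S) = v^o(S)`. -/
theorem optimistic_is_dual_of_pessimistic (P : StreamingProblem) :
    ∀ S ⊆ P.N, (pessGame P P.N : ℤ) - (pessGame P (P.N \ S) : ℤ) = (optGame P S : ℤ) := by
  intro S hS
  have hsplit := card_filter_add_card_filter_not (s := P.M) (p := fun j => Disjoint (P.Lset j) S)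
  rw [pessGame_N_eq_card_M, pessGame_sdiff_eq_card_filter_disjoint, optGame_eq_card_filter_not_disjoint P hS]
  omega
end

section
/- An index I satisfies additivity, reasonable lower bound, equal global impact of users, and symmetry on fans if and only if there exists, for each finite set of artists N, a positive real number λ_N such that for every streaming problem (N, M, t) and every i ∈ N, I_i(N, M, t) = λ_N · Sh_i(N, M, t); in particular, the associated reward rule of such an I coincides with the Shapley index. -/
open Finset

open StreamingProblem

/-- Additivity of an index. -/
def AdditiveIndex (I : StreamingProblem → ℕ → ℝ) : Prop :=
  ∀ P P₁ P₂ : StreamingProblem,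
    P₁.N = P.N → P₂.N = P.N →
    P.M = P₁.M ∪ P₂.M → Disjoint P₁.M P₂.M →
    (∀ i ∈ P.N, ∀ j ∈ P₁.M, P.t i j = P₁.t i j) →
    (∀ i ∈ P.N, ∀ j ∈ P₂.M, P.t i j = P₂.t i j) →
    ∀ i ∈ P.N, I P i = I P₁ i + I P₂ i

/-- Reasonable lower bound of an index. -/
def ReasonableLowerBound (I : StreamingProblem → ℕ → ℝ) : Prop :=
  ∀ P : StreamingProblem, ∀ C ⊆ P.M,
    (C.card : ℝ) ≤
      (∑ i ∈ P.N.filter (fun i => ∃ j ∈ C, 0 < P.t i j), I P i) * (P.M.card : ℝ) /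
        ∑ k ∈ P.N, I P k

/-- Equal global impact of users of an index. -/
def EqualGlobalImpactUsers (I : StreamingProblem → ℕ → ℝ) : Prop :=
  ∀ P Q Q' : StreamingProblem, ∀ j ∈ P.M, ∀ j' ∈ P.M, j ≠ j' →
    Q.N = P.N → Q.M = P.M.erase j → Q.t = P.t →
    Q'.N = P.N → Q'.M = P.M.erase j' → Q'.t = P.t →
    ∑ i ∈ Q.N, I Q i = ∑ i ∈ Q'.N, I Q' i

/-- Symmetry on fans of an index. -/
def SymmetryOnFans (I : StreamingProblem → ℕ → ℝ) : Prop :=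
  ∀ P : StreamingProblem, ∀ i ∈ P.N, ∀ i' ∈ P.N,
    P.Fset i = P.Fset i' → I P i = I P i'

/-- Order preservation of an index. -/
def OrderPreservation (I : StreamingProblem → ℕ → ℝ) : Prop :=
  ∀ P : StreamingProblem, ∀ i ∈ P.N, ∀ i' ∈ P.N,
    (∀ j ∈ P.M, P.t i j ≤ P.t i' j) → I P i ≤ I P i'

/-- Non-unilateral manipulability of an index. -/
def NonUnilateralManipulability (I : StreamingProblem → ℕ → ℝ) : Prop :=
  ∀ P P' : StreamingProblem, ∀ i ∈ P.N,
    P'.N = P.N → P'.M = P.M →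
    P.Fset i = P'.Fset i →
    (∀ j ∈ P.M, P.t i j ≤ P'.t i j) →
    (∀ k ∈ P.N, k ≠ i → ∀ j ∈ P.M, P.t k j = P'.t k j) →
    I P' i ≤ I P i

/-- Null artists axiom of an index. -/
def NullArtists (I : StreamingProblem → ℕ → ℝ) : Prop :=
  ∀ P : StreamingProblem, ∀ i ∈ P.N, (∑ j ∈ P.M, P.t i j) = 0 → I P i = 0

/-- Equal impact of artists of an index. -/
def EqualImpactArtists (I : StreamingProblem → ℕ → ℝ) : Prop :=
  ∀ P Q Q' : StreamingProblem, ∀ i ∈ P.N, ∀ i' ∈ P.N, i ≠ i' →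
    Q.N = P.N.erase i' → Q.M = P.M → Q.t = P.t →
    Q'.N = P.N.erase i → Q'.M = P.M → Q'.t = P.t →
    I P i - I Q i = I P i' - I Q' i'

/-- An index assigns nonnegative reals to the artists, with positive total sum. -/
def IsIndex (I : StreamingProblem → ℕ → ℝ) : Prop :=
  ∀ P : StreamingProblem, (∀ i ∈ P.N, 0 ≤ I P i) ∧ 0 < ∑ i ∈ P.N, I P i

/-- The reward rule `R^I` associated with an index `I`. -/
noncomputable def Reward (I : StreamingProblem → ℕ → ℝ) (P : StreamingProblem) (i : ℕ) : ℝ :=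
  I P i * (P.M.card : ℝ) / ∑ k ∈ P.N, I P k

/-!
By additivity, an index is determined by its values on single-user problems. There, the
reasonable lower bound (with `C = M`) puts the whole index on the artists the user streams, and
symmetry on fans splits it equally among them, so `I_i = T · Sh_i` with `T` the total. Gluing two
single-user problems into a two-user one, equal global impact of users shows that `T` depends only
on `N`; this is `λ_N`. Conversely `λ_N · Sh` satisfies the axioms because every user's Shapley
shares sum to one, so `∑ λ_N · Sh = λ_N · |M|`.
-/

namespace StreamingProblem

variable (P : StreamingProblem)

lemma Lset_nonempty {j : ℕ} (hj : j ∈ P.M) : (P.Lset j).Nonempty := by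
  obtain ⟨i, hi, hpos⟩ := sum_pos_iff.mp (P.streams_pos j hj)
  exact ⟨i, mem_filter.2 ⟨hi, hpos⟩⟩

lemma Sh_eq_sum_ite (i : ℕ) :
    P.Sh i = ∑ j ∈ P.M, if 0 < P.t i j then 1 / ((P.Lset j).card : ℝ) else 0 :=
  sum_filter _ _

lemma Sh_eq_of_Fset_eq {i i' : ℕ} (h : P.Fset i = P.Fset i') : P.Sh i = P.Sh i' :=
  congrArg (fun F => ∑ j ∈ F, (1 : ℝ) / ((P.Lset j).card : ℝ)) h

lemma Sh_of_M_eq_singleton {j : ℕ} (hM : P.M = {j}) (i : ℕ) :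
    P.Sh i = if 0 < P.t i j then 1 / ((P.Lset j).card : ℝ) else 0 := by
  rw [Sh_eq_sum_ite, hM, sum_singleton]

/-- Each user `j ∈ C` hands out one unit, split evenly over `L^j ⊆ A`. -/
lemma sum_sum_ite_eq_card {A C : Finset ℕ} (hA : A ⊆ P.N) (hC : C ⊆ P.M)
    (hL : ∀ j ∈ C, P.Lset j ⊆ A) :
    ∑ i ∈ A, ∑ j ∈ C, (if 0 < P.t i j then 1 / ((P.Lset j).card : ℝ) else 0) = C.card := by
  rw [sum_comm, card_eq_sum_ones, Nat.cast_sum]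
  refine sum_congr rfl fun j hj => ?_
  have hAj : A.filter (fun i => 0 < P.t i j) = P.Lset j := by
    ext i
    simp only [mem_filter, Lset]
    exact ⟨fun h => ⟨hA h.1, h.2⟩, fun h => ⟨hL j hj (mem_filter.2 h), h.2⟩⟩
  have hcard : ((P.Lset j).card : ℝ) ≠ 0 := by
    exact_mod_cast (P.Lset_nonempty (hC hj)).card_pos.ne'
  rw [← sum_filter, hAj, sum_const, nsmul_eq_mul, Nat.cast_one, mul_one_div_cancel hcard]

lemma sum_Sh : ∑ i ∈ P.N, P.Sh i = P.M.card := by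
  simp_rw [Sh_eq_sum_ite]
  exact P.sum_sum_ite_eq_card subset_rfl subset_rfl fun j _ => filter_subset _ _

lemma card_le_sum_Sh {C : Finset ℕ} (hC : C ⊆ P.M) :
    (C.card : ℝ) ≤ ∑ i ∈ P.N.filter (fun i => ∃ j ∈ C, 0 < P.t i j), P.Sh i := by
  have hL : ∀ j ∈ C, P.Lset j ⊆ P.N.filter (fun i => ∃ j ∈ C, 0 < P.t i j) :=
    fun j hj i hi => mem_filter.2 ⟨(mem_filter.1 hi).1, j, hj, (mem_filter.1 hi).2⟩
  rw [← P.sum_sum_ite_eq_card (filter_subset _ _) hC hL]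
  refine sum_le_sum fun i _ => ?_
  rw [Sh_eq_sum_ite]
  exact sum_le_sum_of_subset_of_nonneg hC fun _ _ _ => by positivity

lemma Lset_eq_of_t_eq {Q : StreamingProblem} (hN : Q.N = P.N) {j : ℕ}
    (ht : ∀ i ∈ P.N, P.t i j = Q.t i j) : P.Lset j = Q.Lset j := by
  rw [Lset, Lset, hN]
  exact filter_congr fun i hi => by rw [ht i hi]

lemma Sh_eq_sum_ite_of_t_eq {Q : StreamingProblem} (hN : Q.N = P.N)
    (ht : ∀ i ∈ P.N, ∀ j ∈ Q.M, P.t i j = Q.t i j) {i : ℕ} (hi : i ∈ P.N) :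
    Q.Sh i = ∑ j ∈ Q.M, if 0 < P.t i j then 1 / ((P.Lset j).card : ℝ) else 0 := by
  rw [Sh_eq_sum_ite]
  exact sum_congr rfl fun j hj => by rw [ht i hi j hj, P.Lset_eq_of_t_eq hN (ht · · j hj)]

lemma Sh_add {P₁ P₂ : StreamingProblem} (hN₁ : P₁.N = P.N) (hN₂ : P₂.N = P.N)
    (hM : P.M = P₁.M ∪ P₂.M) (hdis : Disjoint P₁.M P₂.M)
    (ht₁ : ∀ i ∈ P.N, ∀ j ∈ P₁.M, P.t i j = P₁.t i j)
    (ht₂ : ∀ i ∈ P.N, ∀ j ∈ P₂.M, P.t i j = P₂.t i j) {i : ℕ} (hi : i ∈ P.N) :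
    P.Sh i = P₁.Sh i + P₂.Sh i := by
  rw [P.Sh_eq_sum_ite_of_t_eq hN₁ ht₁ hi, P.Sh_eq_sum_ite_of_t_eq hN₂ ht₂ hi, Sh_eq_sum_ite, hM,
    sum_union hdis]

def restrictUsers (A : Finset ℕ) (hA : A ⊆ P.M) (hne : A.Nonempty) : StreamingProblem :=
  ⟨P.N, A, P.t, P.N_nonempty, hne, fun j hj => P.streams_pos j (hA hj)⟩

def singleUserUniform (N : Finset ℕ) (hN : N.Nonempty) (u : ℕ) : StreamingProblem :=
  ⟨N, {u}, fun _ _ => 1, hN, singleton_nonempty u, fun _ _ => by simpa using hN.card_pos⟩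

/-- On a user of both problems, the column of `P` is used. -/
def glue (P' : StreamingProblem) (hN : P'.N = P.N) : StreamingProblem where
  N := P.N
  M := P.M ∪ P'.M
  t i j := if j ∈ P.M then P.t i j else P'.t i j
  N_nonempty := P.N_nonempty
  M_nonempty := P.M_nonempty.mono subset_union_left
  streams_pos j hj := by
    by_cases h : j ∈ P.M
    · simpa [h] using P.streams_pos j h
    · simpa [h, ← hN] using P'.streams_pos j ((mem_union.1 hj).resolve_left h)

end StreamingProblem

open StreamingProblem

section Shapley

def IsScaledShapley (I : StreamingProblem → ℕ → ℝ) (lam : Finset ℕ → ℝ) : Prop :=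
  ∀ P : StreamingProblem, ∀ i ∈ P.N, I P i = lam P.N * P.Sh i

variable {I : StreamingProblem → ℕ → ℝ} {lam : Finset ℕ → ℝ}

lemma IsScaledShapley.sum_eq (hsh : IsScaledShapley I lam) (P : StreamingProblem) :
    ∑ i ∈ P.N, I P i = lam P.N * P.M.card := by
  rw [sum_congr rfl (hsh P), ← mul_sum, sum_Sh]

lemma IsScaledShapley.reward_eq_Sh (hsh : IsScaledShapley I lam) (hlam : ∀ N, 0 < lam N)
    (P : StreamingProblem) {i : ℕ} (hi : i ∈ P.N) : Reward I P i = P.Sh i := by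
  have hm : (0 : ℝ) < P.M.card := by exact_mod_cast P.M_nonempty.card_pos
  have hl := hlam P.N
  rw [Reward, hsh P i hi, hsh.sum_eq]
  field_simp

lemma AdditiveIndex.of_isScaledShapley (hsh : IsScaledShapley I lam) : AdditiveIndex I := by
  intro P P₁ P₂ hN₁ hN₂ hM hdis ht₁ ht₂ i hi
  rw [hsh P i hi, hsh P₁ i (hN₁ ▸ hi), hsh P₂ i (hN₂ ▸ hi), hN₁, hN₂,
    P.Sh_add hN₁ hN₂ hM hdis ht₁ ht₂ hi, mul_add]

lemma ReasonableLowerBound.of_isScaledShapley (hsh : IsScaledShapley I lam)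
    (hlam : ∀ N, 0 < lam N) : ReasonableLowerBound I := by
  intro P C hC
  have hm : (0 : ℝ) < P.M.card := by exact_mod_cast P.M_nonempty.card_pos
  have hl := hlam P.N
  rw [hsh.sum_eq, sum_congr rfl fun i hi => hsh P i (mem_filter.1 hi).1, ← mul_sum]
  calc (C.card : ℝ) ≤ ∑ i ∈ P.N.filter (fun i => ∃ j ∈ C, 0 < P.t i j), P.Sh i :=
        P.card_le_sum_Sh hC
    _ = _ := by field_simp

lemma EqualGlobalImpactUsers.of_isScaledShapley (hsh : IsScaledShapley I lam) :
    EqualGlobalImpactUsers I := by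
  intro P Q Q' j hj j' hj' _ hQN hQM _ hQ'N hQ'M _
  rw [hsh.sum_eq, hsh.sum_eq, hQN, hQ'N, hQM, hQ'M, card_erase_of_mem hj, card_erase_of_mem hj']

lemma SymmetryOnFans.of_isScaledShapley (hsh : IsScaledShapley I lam) : SymmetryOnFans I :=
  fun P i hi i' hi' h => by rw [hsh P i hi, hsh P i' hi', P.Sh_eq_of_Fset_eq h]

end Shapley

section Axioms

variable {I : StreamingProblem → ℕ → ℝ}

lemma AdditiveIndex.apply_glue (hadd : AdditiveIndex I) (P P' : StreamingProblem)
    (hN : P'.N = P.N) (hdis : Disjoint P.M P'.M) :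
    ∀ i ∈ P.N, I (P.glue P' hN) i = I P i + I P' i :=
  hadd (P.glue P' hN) P P' rfl hN rfl hdis (fun _ _ _ hj => if_pos hj)
    fun _ _ _ hj => if_neg (disjoint_right.1 hdis hj)

/-- Glue both problems to the same fresh single-user problem and compare. -/
lemma AdditiveIndex.congr (hadd : AdditiveIndex I) {P P' : StreamingProblem} (hN : P'.N = P.N)
    (hM : P'.M = P.M) (ht : ∀ i ∈ P.N, ∀ j ∈ P.M, P.t i j = P'.t i j) :
    ∀ i ∈ P.N, I P i = I P' i := by
  obtain ⟨u, hu⟩ := Infinite.exists_notMem_finset P.M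
  set R := singleUserUniform P.N P.N_nonempty u
  have hdis : Disjoint P.M R.M := disjoint_singleton_right.2 hu
  have hP := hadd.apply_glue P R rfl hdis
  have hP' := hadd (P.glue R rfl) P' R hN rfl (by rw [hM]; rfl) (hM ▸ hdis)
    (fun i hi j hj => by
      rw [hM] at hj
      exact (if_pos hj).trans (ht i hi j hj))
    fun _ _ _ hj => if_neg (disjoint_right.1 hdis hj)
  intro i hi
  linarith [hP i hi, hP' i hi]

/-- Removing either user of the glued problem leaves a copy of `P'`, respectively of `P`. -/
lemma sum_eq_of_single_user_of_ne (hadd : AdditiveIndex I) (hegi : EqualGlobalImpactUsers I)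
    {P P' : StreamingProblem} (hN : P'.N = P.N) {j j' : ℕ} (hM : P.M = {j}) (hM' : P'.M = {j'})
    (hne : j ≠ j') : ∑ i ∈ P.N, I P i = ∑ i ∈ P'.N, I P' i := by
  set W := P.glue P' hN
  have hWM : W.M = {j, j'} := by
    show P.M ∪ P'.M = _
    rw [hM, hM', insert_eq]
  have hWj : W.M.erase j = {j'} := by rw [hWM, erase_insert (notMem_singleton.2 hne)]
  have hWj' : W.M.erase j' = {j} := by rw [hWM, pair_comm, erase_insert (notMem_singleton.2 hne.symm)]
  set Q := W.restrictUsers {j'} (by simp [hWM]) (singleton_nonempty j')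
  set Q' := W.restrictUsers {j} (by simp [hWM]) (singleton_nonempty j)
  have hQ : ∀ i ∈ P.N, I Q i = I P' i := hadd.congr (P := Q) hN hM' fun _ _ k hk => by
    rw [mem_singleton.1 hk]
    exact if_neg (by rw [hM, mem_singleton]; exact hne.symm)
  have hQ' : ∀ i ∈ P.N, I Q' i = I P i := hadd.congr (P := Q') (P' := P) rfl hM
    fun _ _ _ hk => if_pos (hM ▸ hk)
  calc ∑ i ∈ P.N, I P i = ∑ i ∈ P.N, I Q' i := (sum_congr rfl hQ').symm
    _ = ∑ i ∈ P.N, I Q i :=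
      (hegi W Q Q' j (by simp [hWM]) j' (by simp [hWM]) hne rfl hWj.symm rfl rfl hWj'.symm rfl).symm
    _ = ∑ i ∈ P'.N, I P' i := by rw [hN]; exact sum_congr rfl hQ

/-- Equal global impact only compares distinct users, so pass through a third one. -/
lemma sum_eq_of_single_user (hadd : AdditiveIndex I) (hegi : EqualGlobalImpactUsers I)
    {P P' : StreamingProblem} (hN : P'.N = P.N) {j j' : ℕ} (hM : P.M = {j}) (hM' : P'.M = {j'}) :
    ∑ i ∈ P.N, I P i = ∑ i ∈ P'.N, I P' i := by
  obtain ⟨u, hu⟩ := Infinite.exists_notMem_finset ({j, j'} : Finset ℕ)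
  rw [sum_eq_of_single_user_of_ne hadd hegi (P := P) (P' := singleUserUniform P.N P.N_nonempty u)
    rfl hM rfl (by rintro rfl; simp at hu)]
  exact sum_eq_of_single_user_of_ne hadd hegi hN rfl hM' (by rintro rfl; simp at hu)

/-- The candidate `λ_N`; its value at `N = ∅`, where no problem lives, only has to be positive. -/
noncomputable def singleUserTotal (I : StreamingProblem → ℕ → ℝ) (N : Finset ℕ) : ℝ :=
  if h : N.Nonempty then ∑ i ∈ N, I (singleUserUniform N h 0) i else 1

lemma singleUserTotal_pos (hI : IsIndex I) (N : Finset ℕ) : 0 < singleUserTotal I N := by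
  unfold singleUserTotal
  split_ifs
  exacts [(hI _).2, one_pos]

lemma sum_eq_singleUserTotal (hadd : AdditiveIndex I) (hegi : EqualGlobalImpactUsers I)
    {P : StreamingProblem} {j : ℕ} (hM : P.M = {j}) :
    ∑ i ∈ P.N, I P i = singleUserTotal I P.N := by
  rw [singleUserTotal, dif_pos P.N_nonempty]
  exact sum_eq_of_single_user hadd hegi rfl hM rfl

/-- Taking `C = M` forces all of the index onto artists with at least one stream. -/
lemma ReasonableLowerBound.eq_zero_of_forall_t_eq_zero (hI : IsIndex I)
    (hrlb : ReasonableLowerBound I) (P : StreamingProblem) {i : ℕ} (hi : i ∈ P.N)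
    (h0 : ∀ j ∈ P.M, P.t i j = 0) : I P i = 0 := by
  have hm : (0 : ℝ) < P.M.card := by exact_mod_cast P.M_nonempty.card_pos
  have hbound := hrlb P P.M subset_rfl
  rw [le_div_iff₀ (hI P).2] at hbound
  have hsplit := sum_filter_add_sum_filter_not P.N (fun i => ∃ j ∈ P.M, 0 < P.t i j) (I P)
  have hi' : i ∈ P.N.filter (fun i => ¬∃ j ∈ P.M, 0 < P.t i j) := by simp_all
  have hle := single_le_sum (fun k hk => (hI P).1 k (mem_filter.1 hk).1) hi'
  nlinarith [(hI P).1 i hi]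

lemma eq_sum_mul_Sh_of_single_user (hI : IsIndex I) (hrlb : ReasonableLowerBound I)
    (hsym : SymmetryOnFans I) {P : StreamingProblem} {j : ℕ} (hM : P.M = {j}) {i : ℕ}
    (hi : i ∈ P.N) : I P i = (∑ k ∈ P.N, I P k) * P.Sh i := by
  have hFset : ∀ k, 0 < P.t k j → P.Fset k = {j} := fun k hk => by
    rw [Fset, hM, filter_singleton, if_pos hk]
  have hzero : ∀ k ∈ P.N, ¬0 < P.t k j → I P k = 0 := fun k hk hk' =>
    hrlb.eq_zero_of_forall_t_eq_zero hI P hk (by simpa [hM] using hk')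
  rw [P.Sh_of_M_eq_singleton hM]
  split_ifs with hpos
  · have hconst : ∀ k ∈ P.N, I P k = if 0 < P.t k j then I P i else 0 := fun k hk => by
      split_ifs with hk'
      exacts [hsym P k hk i hi (by rw [hFset k hk', hFset i hpos]), hzero k hk hk']
    have hcard : ((P.Lset j).card : ℝ) ≠ 0 := by
      exact_mod_cast (P.Lset_nonempty (hM ▸ mem_singleton_self j)).card_pos.ne'
    have hsum : ∑ k ∈ P.N, I P k = (P.Lset j).card * I P i := by
      rw [sum_congr rfl hconst, ← sum_filter, ← Lset.eq_1, sum_const, nsmul_eq_mul]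
    rw [hsum]
    field_simp
  · rw [mul_zero]
    exact hzero i hi hpos

lemma AdditiveIndex.eq_of_eq_of_single_user {J : StreamingProblem → ℕ → ℝ}
    (hI : AdditiveIndex I) (hJ : AdditiveIndex J)
    (h : ∀ P : StreamingProblem, ∀ j, P.M = {j} → ∀ i ∈ P.N, I P i = J P i)
    : ∀ P : StreamingProblem, ∀ i ∈ P.N, I P i = J P i := by
  suffices ∀ (M : Finset ℕ) (hM : M.Nonempty) (P : StreamingProblem), P.M = M →
      ∀ i ∈ P.N, I P i = J P i from fun P => this P.M P.M_nonempty P rfl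
  intro M hM
  induction hM using Finset.Nonempty.cons_induction with
  | singleton j => exact fun P hP => h P j hP
  | cons j s hj hs ih =>
    intro P hP i hi
    have hsub : s ⊆ P.M := hP ▸ subset_cons hj
    set P₁ := P.restrictUsers {j} (by simp [hP]) (singleton_nonempty j)
    set P₂ := P.restrictUsers s hsub hs
    have hsplit : P.M = P₁.M ∪ P₂.M := by
      show P.M = {j} ∪ s
      rw [hP, cons_eq_insert, insert_eq]
    have hdis : Disjoint P₁.M P₂.M := disjoint_singleton_left.2 hj
    rw [hI P P₁ P₂ rfl rfl hsplit hdis (fun _ _ _ _ => rfl) (fun _ _ _ _ => rfl) i hi,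
      hJ P P₁ P₂ rfl rfl hsplit hdis (fun _ _ _ _ => rfl) (fun _ _ _ _ => rfl) i hi,
      h P₁ j rfl i hi, ih P₂ rfl i hi]

theorem exists_isScaledShapley_of_axioms (hI : IsIndex I) (hadd : AdditiveIndex I)
    (hrlb : ReasonableLowerBound I) (hegi : EqualGlobalImpactUsers I) (hsym : SymmetryOnFans I) :
    ∃ lam : Finset ℕ → ℝ, (∀ N, 0 < lam N) ∧ IsScaledShapley I lam := by
  refine ⟨singleUserTotal I, singleUserTotal_pos hI, hadd.eq_of_eq_of_single_user
    (.of_isScaledShapley (lam := singleUserTotal I) fun _ _ _ => rfl) fun P j hM i hi => ?_⟩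
  rw [eq_sum_mul_Sh_of_single_user hI hrlb hsym hM hi, sum_eq_singleUserTotal hadd hegi hM]

end Axioms

/-- Characterization of the Shapley index. -/
theorem shapley_characterization_2 (I : StreamingProblem → ℕ → ℝ) (hI : IsIndex I) :
    ((AdditiveIndex I ∧ ReasonableLowerBound I ∧ EqualGlobalImpactUsers I ∧ SymmetryOnFans I) ↔
      ∃ lam : Finset ℕ → ℝ, (∀ N : Finset ℕ, 0 < lam N) ∧
        ∀ P : StreamingProblem, ∀ i ∈ P.N, I P i = lam P.N * P.Sh i) ∧
    ((AdditiveIndex I ∧ ReasonableLowerBound I ∧ EqualGlobalImpactUsers I ∧ SymmetryOnFans I) →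
      ∀ P : StreamingProblem, ∀ i ∈ P.N, Reward I P i = P.Sh i) := by
  have forward : AdditiveIndex I ∧ ReasonableLowerBound I ∧ EqualGlobalImpactUsers I ∧
      SymmetryOnFans I → ∃ lam : Finset ℕ → ℝ, (∀ N, 0 < lam N) ∧ IsScaledShapley I lam :=
    fun ⟨hadd, hrlb, hegi, hsym⟩ => exists_isScaledShapley_of_axioms hI hadd hrlb hegi hsym
  refine ⟨⟨forward, fun ⟨lam, hlam, hsh⟩ => ⟨.of_isScaledShapley hsh,
    .of_isScaledShapley hsh hlam, .of_isScaledShapley hsh, .of_isScaledShapley hsh⟩⟩,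
    fun h P i hi => ?_⟩
  obtain ⟨lam, hlam, hsh⟩ := forward h
  exact hsh.reward_eq_Sh hlam P hi
end

section
/- The Shapley index satisfies equal impact of artists: for every streaming problem (N, M, t) and every pair of distinct artists i, i' ∈ N such that every user streams some artist other than i and some artist other than i' (so that the reduced triples are streaming problems), it holds that Sh_i(N, M, t) − Sh_i(N∖{i'}, M, t_{−i'}) = Sh_{i'}(N, M, t) − Sh_{i'}(N∖{i}, M, t_{−i}), where t_{−i} is t with the row of artist i removed. -/
open Finset

open StreamingProblem

/-! Removing `i'` changes the index of `i` only at the users who stream both `i` and `i'`,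
and at such a user `j` by `1/|L^j| - 1/(|L^j| - 1)`; the resulting sum is symmetric in `i`
and `i'`. -/

theorem Finset.one_div_card_sub_one_div_card_erase {α K : Type*} [DecidableEq α] [DivisionRing K]
    (s : Finset α) (a : α) :
    (1 : K) / #s - 1 / #(s.erase a) = if a ∈ s then 1 / #s - 1 / (#s - 1 : K) else 0 := by
  split_ifs with h
  · rw [card_erase_of_mem h, Nat.cast_pred (card_pos.2 ⟨a, h⟩)]
  · rw [erase_eq_of_notMem h, sub_self]

namespace StreamingProblem

theorem mem_Lset_iff_mem_Fset {P : StreamingProblem} {i j : ℕ} (hi : i ∈ P.N) (hj : j ∈ P.M) :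
    i ∈ P.Lset j ↔ j ∈ P.Fset i := by
  simp [Lset, Fset, hi, hj]

theorem Lset_eq_erase {P Q : StreamingProblem} {i' : ℕ} (hN : Q.N = P.N.erase i')
    (ht : Q.t = P.t) (j : ℕ) : Q.Lset j = (P.Lset j).erase i' := by
  simp [Lset, hN, ht, filter_erase]

theorem Sh_eq_sum_Fset (P : StreamingProblem) (i : ℕ) :
    P.Sh i = ∑ j ∈ P.Fset i, (1 : ℝ) / #(P.Lset j) :=
  rfl

theorem Sh_sub_Sh_of_erase {P Q : StreamingProblem} {i i' : ℕ} (hi' : i' ∈ P.N)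
    (hN : Q.N = P.N.erase i') (hM : Q.M = P.M) (ht : Q.t = P.t) :
    P.Sh i - Q.Sh i =
      ∑ j ∈ P.Fset i ∩ P.Fset i', ((1 : ℝ) / #(P.Lset j) - 1 / (#(P.Lset j) - 1 : ℝ)) := by
  have hF : Q.Fset i = P.Fset i := by simp [Fset, hM, ht]
  rw [Sh_eq_sum_Fset, Sh_eq_sum_Fset, hF, ← sum_sub_distrib, ← sum_ite_mem]
  refine sum_congr rfl fun j hj => ?_
  rw [Lset_eq_erase hN ht, one_div_card_sub_one_div_card_erase]
  exact if_congr (mem_Lset_iff_mem_Fset hi' (filter_subset _ _ hj)) rfl rfl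

end StreamingProblem

/-- The Shapley index satisfies equal impact of artists. -/
theorem shapley_equal_impact_artists : EqualImpactArtists StreamingProblem.Sh := by
  intro P Q Q' i hi i' hi' _ hQN hQM hQt hQ'N hQ'M hQ't
  rw [Sh_sub_Sh_of_erase hi' hQN hQM hQt, Sh_sub_Sh_of_erase hi hQ'N hQ'M hQ't, inter_comm]
end

section
/- The Shapley index satisfies order preservation: for every streaming problem (N, M, t) and every pair of artists i, i' ∈ N such that t_{ij} ≤ t_{i'j} for all j ∈ M, it holds that Sh_i(N, M, t) ≤ Sh_{i'}(N, M, t). -/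
open Finset

open StreamingProblem

namespace StreamingProblem

variable {P : StreamingProblem} {i i' : ℕ}

theorem Fset_subset_Fset_of_le (h : ∀ j ∈ P.M, P.t i j ≤ P.t i' j) : P.Fset i ⊆ P.Fset i' :=
  monotone_filter_right _ fun j hj hpos => hpos.trans_le (h j hj)

theorem Sh_le_Sh_of_Fset_subset (h : P.Fset i ⊆ P.Fset i') : P.Sh i ≤ P.Sh i' :=
  sum_le_sum_of_subset_of_nonneg h fun _ _ _ => by positivity

end StreamingProblem

/-- The Shapley index satisfies order preservation. -/
theorem shapley_order_preservation : OrderPreservation StreamingProblem.Sh :=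
  fun _ _ _ _ _ h => Sh_le_Sh_of_Fset_subset (Fset_subset_Fset_of_le h)
end

section
/- The Shapley index satisfies non-unilateral manipulability: for streaming problems (N, M, t) and (N, M, t') and an artist i ∈ N such that F_i(N,M,t) = F_i(N,M,t'), t_{ij} ≤ t'_{ij} for all j ∈ M, and t_{kj} = t'_{kj} for all k ∈ N∖{i} and j ∈ M, it holds that Sh_i(N, M, t) ≥ Sh_i(N, M, t') (in fact with equality). -/
open Finset

open StreamingProblem

/-! Sh_i only sees which artists each fan of i streams, not how often. Raising the streams of i
without changing its fans therefore changes neither F_i nor any L^j, and Sh_i stays the same. -/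

namespace StreamingProblem

theorem Lset_congr {P P' : StreamingProblem} {j : ℕ} (hN : P.N = P'.N)
    (h : ∀ k ∈ P.N, 0 < P.t k j ↔ 0 < P'.t k j) : P.Lset j = P'.Lset j := by
  unfold Lset
  rw [← hN]
  exact filter_congr h

theorem Sh_congr {P P' : StreamingProblem} {i : ℕ} (hF : P.Fset i = P'.Fset i)
    (hL : ∀ j ∈ P.Fset i, P.Lset j = P'.Lset j) : P.Sh i = P'.Sh i :=
  sum_congr hF fun j hj => by rw [hL j (by rwa [hF])]

theorem Sh_eq_of_Fset_eq_of_eq_off {P P' : StreamingProblem} {i : ℕ} (hN : P'.N = P.N)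
    (hF : P.Fset i = P'.Fset i) (hothers : ∀ k ∈ P.N, k ≠ i → ∀ j ∈ P.M, P.t k j = P'.t k j) :
    P.Sh i = P'.Sh i := by
  refine Sh_congr hF fun j hj => Lset_congr hN.symm fun k hk => ?_
  obtain rfl | hki := eq_or_ne k i
  · have hj' : j ∈ P'.Fset k := hF ▸ hj
    exact iff_of_true (mem_filter.1 hj).2 (mem_filter.1 hj').2
  · rw [hothers k hk hki j (mem_filter.1 hj).1]

end StreamingProblem

/-- The Shapley index satisfies non-unilateral manipulability (in fact with equality). -/
theorem shapley_non_unilateral_manipulability :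
    NonUnilateralManipulability StreamingProblem.Sh ∧
    (∀ P P' : StreamingProblem, ∀ i ∈ P.N,
      P'.N = P.N → P'.M = P.M →
      P.Fset i = P'.Fset i →
      (∀ j ∈ P.M, P.t i j ≤ P'.t i j) →
      (∀ k ∈ P.N, k ≠ i → ∀ j ∈ P.M, P.t k j = P'.t k j) →
      P.Sh i = P'.Sh i) := by
  exact ⟨fun _ _ _ _ hN _ hF _ hothers => (Sh_eq_of_Fset_eq_of_eq_off hN hF hothers).ge,
    fun _ _ _ _ hN _ hF _ hothers => Sh_eq_of_Fset_eq_of_eq_off hN hF hothers⟩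
end

section
/- The Shapley index does not satisfy pairwise homogeneity: there exist a streaming problem (N, M, t), artists i, i' ∈ N, and a positive natural number λ with t_{i'j} = λ·t_{ij} for all j ∈ M, such that Sh_{i'}(N, M, t) ≠ λ·Sh_i(N, M, t). (For instance, N = {1,2}, M = {a,b,c}, t_{1j} = 100 and t_{2j} = 200 for all j, λ = 2: then Sh_1 = Sh_2 = 3/2.) -/
open Finset

open StreamingProblem

/-! The Shapley index only sees which users streamed an artist, not how often. Scaling an
artist's streams by `λ > 0` keeps the same fans, so `Sh_{i'} = Sh_i`, which differs from
`λ · Sh_i` as soon as `λ ≥ 2` and `i` has a fan. -/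

namespace StreamingProblem

variable (P : StreamingProblem)

theorem Sh_congr_s17 {i i' : ℕ} (h : ∀ j ∈ P.M, 0 < P.t i j ↔ 0 < P.t i' j) :
    P.Sh i = P.Sh i' := by
  unfold Sh
  rw [Finset.filter_congr h]

theorem Sh_pos {i j : ℕ} (hi : i ∈ P.N) (hj : j ∈ P.M) (ht : 0 < P.t i j) :
    0 < P.Sh i := by
  refine sum_pos (fun k hk => ?_) ⟨j, mem_filter.2 ⟨hj, ht⟩⟩
  have hL : 0 < (P.Lset k).card := card_pos.2 ⟨i, mem_filter.2 ⟨hi, (mem_filter.1 hk).2⟩⟩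
  positivity

theorem Sh_eq_of_scaled {i i' lam : ℕ} (hlam : 0 < lam)
    (h : ∀ j ∈ P.M, P.t i' j = lam * P.t i j) : P.Sh i' = P.Sh i :=
  (P.Sh_congr_s17 fun j hj => by rw [h j hj, Nat.mul_pos_iff_of_pos_left hlam]).symm

theorem Sh_ne_mul_of_scaled {i i' j lam : ℕ}
    (hlam : 1 < lam) (hi : i ∈ P.N) (hj : j ∈ P.M) (ht : 0 < P.t i j)
    (h : ∀ j ∈ P.M, P.t i' j = lam * P.t i j) : P.Sh i' ≠ (lam : ℝ) * P.Sh i := by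
  rw [P.Sh_eq_of_scaled (by omega) h]
  exact (lt_mul_of_one_lt_left (P.Sh_pos hi hj ht) (by exact_mod_cast hlam)).ne

end StreamingProblem

/-- The Shapley index does not satisfy pairwise homogeneity: there are a streaming
problem, artists `i, i'` and a positive natural `lam` with `t_{i'j} = lam * t_{ij}`
for all users `j`, yet `Sh_{i'} ≠ lam * Sh_i`. -/
theorem shapley_not_pairwise_homogeneous :
    ∃ (P : StreamingProblem) (i i' : ℕ) (lam : ℕ), i ∈ P.N ∧ i' ∈ P.N ∧ 0 < lam ∧
      (∀ j ∈ P.M, P.t i' j = lam * P.t i j) ∧ P.Sh i' ≠ (lam : ℝ) * P.Sh i := by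
  let P : StreamingProblem :=
    ⟨{1, 2}, {0, 1, 2}, fun i _ => 100 * i, ⟨1, by simp⟩, ⟨0, by simp⟩, by simp⟩
  have hscaled : ∀ j ∈ P.M, P.t 2 j = 2 * P.t 1 j := fun _ _ => rfl
  refine ⟨P, 1, 2, 2, by simp [P], by simp [P], two_pos, hscaled, ?_⟩
  have hfan : 0 < P.t 1 0 := by simp [P]
  exact P.Sh_ne_mul_of_scaled one_lt_two (by simp [P]) (by simp [P]) hfan hscaled
end

section
/- The user-centric index U, defined by U_i(N, M, t) = Σ_{j∈M} t_{ij}/T^j where T^j = Σ_{k∈N} t_{kj}, satisfies additivity, reasonable lower bound, and equal global impact of users, but does not satisfy symmetry on fans: there exist a streaming problem (N, M, t) and artists i, i' ∈ N with F_i = F_{i'} and U_i(N, M, t) ≠ U_{i'}(N, M, t). -/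
open Finset

open StreamingProblem

/-- The user-centric index: `U_i(N,M,t) = ∑_{j ∈ M} t_{ij} / T^j`. -/
noncomputable def userCentric (P : StreamingProblem) (i : ℕ) : ℝ :=
  ∑ j ∈ P.M, (P.t i j : ℝ) / ∑ k ∈ P.N, (P.t k j : ℝ)

/-!
Every user's shares `t_ij / T^j` sum to `1`, so `U` hands out exactly one unit per user.
Hence the total is `|M|`, which gives equal global impact of users; the users in `C` put
their whole unit on `L^C`, which gives the lower bound; and additivity holds because `U`
is a sum over users. Symmetry on fans fails because a user splits her unit in proportion
to her streams, not equally among the artists she listens to.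
-/

namespace StreamingProblem

variable (P : StreamingProblem)

theorem sum_share_eq_one {j : ℕ} (hj : j ∈ P.M) {s : Finset ℕ} (hsN : s ⊆ P.N)
    (hLs : P.Lset j ⊆ s) :
    ∑ i ∈ s, (P.t i j : ℝ) / ∑ k ∈ P.N, (P.t k j : ℝ) = 1 := by
  have hT : (0 : ℝ) < ∑ k ∈ P.N, (P.t k j : ℝ) := by exact_mod_cast P.streams_pos j hj
  have hzero : ∀ i ∈ P.N, i ∉ s → (P.t i j : ℝ) = 0 := fun i hi his => by
    have : ¬ 0 < P.t i j := fun hpos => his (hLs (mem_filter.2 ⟨hi, hpos⟩))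
    simp_all
  rw [← sum_div, sum_subset hsN hzero, div_self hT.ne']

theorem sum_userCentric : ∑ i ∈ P.N, userCentric P i = P.M.card := by
  unfold userCentric
  rw [sum_comm, sum_congr rfl fun j hj => P.sum_share_eq_one hj subset_rfl (filter_subset _ _)]
  simp

end StreamingProblem

theorem userCentric_additive : AdditiveIndex userCentric := by
  intro P P₁ P₂ hN₁ hN₂ hM hdisj ht₁ ht₂ i hi
  have restrict : ∀ Q : StreamingProblem, Q.N = P.N → (∀ k ∈ P.N, ∀ j ∈ Q.M, P.t k j = Q.t k j) →
      userCentric Q i = ∑ j ∈ Q.M, (P.t i j : ℝ) / ∑ k ∈ P.N, (P.t k j : ℝ) := by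
    intro Q hN ht
    refine sum_congr rfl fun j hj => ?_
    rw [hN, ht i hi j hj, sum_congr rfl fun k hk => by rw [← ht k hk j hj]]
  rw [userCentric, hM, sum_union hdisj, restrict P₁ hN₁ ht₁, restrict P₂ hN₂ ht₂]

theorem userCentric_reasonableLowerBound : ReasonableLowerBound userCentric := by
  intro P C hC
  set S := P.N.filter fun i => ∃ j ∈ C, 0 < P.t i j
  have hm : (P.M.card : ℝ) ≠ 0 := by exact_mod_cast P.M_nonempty.card_pos.ne'
  have hLS : ∀ j ∈ C, P.Lset j ⊆ S := fun j hj i hi => by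
    obtain ⟨hiN, hpos⟩ := mem_filter.1 hi
    exact mem_filter.2 ⟨hiN, j, hj, hpos⟩
  rw [sum_userCentric, mul_div_assoc, div_self hm, mul_one]
  calc (C.card : ℝ)
      = ∑ j ∈ C, ∑ i ∈ S, (P.t i j : ℝ) / ∑ k ∈ P.N, (P.t k j : ℝ) := by
        rw [sum_congr rfl fun j hj => P.sum_share_eq_one (hC hj) (filter_subset _ _) (hLS j hj)]
        simp
    _ ≤ ∑ j ∈ P.M, ∑ i ∈ S, (P.t i j : ℝ) / ∑ k ∈ P.N, (P.t k j : ℝ) :=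
        sum_le_sum_of_subset_of_nonneg hC fun _ _ _ => sum_nonneg fun _ _ => by positivity
    _ = ∑ i ∈ S, userCentric P i := sum_comm

theorem userCentric_equalGlobalImpactUsers : EqualGlobalImpactUsers userCentric := by
  intro P Q Q' j hj j' hj' _ _ hQM _ _ hQ'M _
  rw [sum_userCentric, sum_userCentric, hQM, hQ'M, card_erase_of_mem hj, card_erase_of_mem hj']

def oneUserTwoArtists : StreamingProblem where
  N := {0, 1}
  M := {0}
  t i _ := i + 1
  N_nonempty := by simp
  M_nonempty := by simp
  streams_pos := by decide

/-- The user-centric index satisfies additivity, reasonable lower bound, and equal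
global impact of users, but not symmetry on fans. -/
theorem userCentric_axioms :
    AdditiveIndex userCentric ∧ ReasonableLowerBound userCentric ∧
    EqualGlobalImpactUsers userCentric ∧
    ∃ (P : StreamingProblem) (i i' : ℕ), i ∈ P.N ∧ i' ∈ P.N ∧
      P.Fset i = P.Fset i' ∧ userCentric P i ≠ userCentric P i' := by
  refine ⟨userCentric_additive, userCentric_reasonableLowerBound,
    userCentric_equalGlobalImpactUsers, oneUserTwoArtists, 0, 1, by decide, by decide, ?_, ?_⟩
  · simp [Fset, oneUserTwoArtists]
  · norm_num [userCentric, oneUserTwoArtists]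
end

section
/- The equal-division index I², defined by I²_i(N, M, t) = m/n for every streaming problem (N, M, t) and every i ∈ N, satisfies additivity, equal global impact of users, symmetry on fans, order preservation, non-unilateral manipulability, and equal impact of artists, but does not satisfy reasonable lower bound: there exist a streaming problem (N, M, t) and a set of users C ⊆ M with Σ_{i∈L^C} I²_i(N, M, t)·m / Σ_{k∈N} I²_k(N, M, t) < |C|, where L^C = ⋃_{j∈C} L^j. -/
open Finset

open StreamingProblem

/-- The equal-division index: `I²_i(N,M,t) = m / n`. -/
noncomputable def equalDivision (P : StreamingProblem) (_i : ℕ) : ℝ :=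
  (P.M.card : ℝ) / (P.N.card : ℝ)

/-! The equal-division index depends on a problem only through `|N|` and `|M|`, so every axiom
that compares problems with the same (or shifted) sizes holds trivially, while the reward of
the artists streamed by a coalition `C` is `|L^C| m / n`, which is below `|C|` as soon as
a single user streams only one of two artists. -/

namespace StreamingProblem

lemma card_N_pos (P : StreamingProblem) : (0 : ℝ) < P.N.card := by
  exact_mod_cast P.N_nonempty.card_pos

lemma card_M_pos (P : StreamingProblem) : (0 : ℝ) < P.M.card := by
  exact_mod_cast P.M_nonempty.card_pos

end StreamingProblem

lemma sum_equalDivision (P : StreamingProblem) (S : Finset ℕ) :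
    ∑ i ∈ S, equalDivision P i = S.card * P.M.card / P.N.card := by
  simp only [equalDivision, sum_const, nsmul_eq_mul, mul_div_assoc]

lemma sum_equalDivision_N (P : StreamingProblem) :
    ∑ i ∈ P.N, equalDivision P i = P.M.card := by
  rw [sum_equalDivision, mul_div_right_comm, div_self P.card_N_pos.ne', one_mul]

lemma reward_sum_equalDivision (P : StreamingProblem) (S : Finset ℕ) :
    (∑ i ∈ S, equalDivision P i) * P.M.card / ∑ k ∈ P.N, equalDivision P k =
      S.card * P.M.card / P.N.card := by
  rw [sum_equalDivision_N, mul_div_cancel_right₀ _ P.card_M_pos.ne', sum_equalDivision]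

lemma additiveIndex_equalDivision : AdditiveIndex equalDivision := by
  intro P P₁ P₂ hN₁ hN₂ hM hdisj _ _ _ _
  simp only [equalDivision, hN₁, hN₂, hM, card_union_of_disjoint hdisj, Nat.cast_add, add_div]

lemma equalGlobalImpactUsers_equalDivision : EqualGlobalImpactUsers equalDivision := by
  intro P Q Q' j hj j' hj' _ _ hQM _ _ hQ'M _
  rw [sum_equalDivision_N, sum_equalDivision_N, hQM, hQ'M, card_erase_of_mem hj,
    card_erase_of_mem hj']

lemma symmetryOnFans_equalDivision : SymmetryOnFans equalDivision :=
  fun _ _ _ _ _ _ => rfl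

lemma orderPreservation_equalDivision : OrderPreservation equalDivision :=
  fun _ _ _ _ _ _ => le_rfl

lemma nonUnilateralManipulability_equalDivision :
    NonUnilateralManipulability equalDivision := by
  intro P P' i _ hN hM _ _ _
  simp only [equalDivision, hN, hM, le_rfl]

lemma equalImpactArtists_equalDivision : EqualImpactArtists equalDivision := by
  intro P Q Q' i hi i' hi' _ hQN hQM _ hQ'N hQ'M _
  simp only [equalDivision, hQN, hQM, hQ'N, hQ'M, card_erase_of_mem hi, card_erase_of_mem hi']

def singleFanProblem : StreamingProblem where
  N := {0, 1}
  M := {0}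
  t i _ := if i = 0 then 1 else 0
  N_nonempty := insert_nonempty 0 {1}
  M_nonempty := singleton_nonempty 0
  streams_pos := by decide

lemma exists_reward_lt_card_equalDivision :
    ∃ (P : StreamingProblem) (C : Finset ℕ), C ⊆ P.M ∧
      (∑ i ∈ P.N.filter (fun i => ∃ j ∈ C, 0 < P.t i j), equalDivision P i) *
        (P.M.card : ℝ) / (∑ k ∈ P.N, equalDivision P k) < (C.card : ℝ) := by
  refine ⟨singleFanProblem, {0}, subset_rfl, ?_⟩
  have hLC : singleFanProblem.N.filter
      (fun i => ∃ j ∈ ({0} : Finset ℕ), 0 < singleFanProblem.t i j) = {0} := by decide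
  rw [reward_sum_equalDivision, hLC]
  norm_num [singleFanProblem]

/-- The equal-division index satisfies additivity, equal global impact of users,
symmetry on fans, order preservation, non-unilateral manipulability, and equal
impact of artists, but not the reasonable lower bound. -/
theorem equalDivision_axioms :
    AdditiveIndex equalDivision ∧ EqualGlobalImpactUsers equalDivision ∧
    SymmetryOnFans equalDivision ∧ OrderPreservation equalDivision ∧
    NonUnilateralManipulability equalDivision ∧ EqualImpactArtists equalDivision ∧
    ∃ (P : StreamingProblem) (C : Finset ℕ), C ⊆ P.M ∧
      (∑ i ∈ P.N.filter (fun i => ∃ j ∈ C, 0 < P.t i j), equalDivision P i) *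
        (P.M.card : ℝ) / (∑ k ∈ P.N, equalDivision P k) < (C.card : ℝ) :=
  ⟨additiveIndex_equalDivision, equalGlobalImpactUsers_equalDivision,
    symmetryOnFans_equalDivision, orderPreservation_equalDivision,
    nonUnilateralManipulability_equalDivision, equalImpactArtists_equalDivision,
    exists_reward_lt_card_equalDivision⟩
end
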